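/- arXiv:2404.10844 — 7 statements merged into one kernel-verified Lean document; each statement's English description precedes it below -/
import Mathlib

section
/- Let A ∈ ℝ^{n×n} be positive definite and v ∈ ℝ^{n×p} have full column rank. Then rank(A − A v (vᵀ A v)⁻¹ vᵀ A) = n − p. -/
/-!
Since `A` is positive definite and `v` is injective, `vᵀ A v` is positive definite, hence
invertible. The matrix `B = A - A v (vᵀ A v)⁻¹ vᵀ A` kills the columns of `v`, and conversely
`B x = 0` gives `A x = A v ((vᵀ A v)⁻¹ vᵀ A x)`, so `x ∈ range v` because `A` is invertible.
Thus `ker B = range v`, and rank–nullity gives `rank B = n - p`.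
-/

open Matrix

namespace Matrix

variable {K m n : Type*} [Field K] [Fintype n]

theorem rank_add_finrank_ker_mulVecLin (B : Matrix m n K) :
    B.rank + Module.finrank K (LinearMap.ker B.mulVecLin) = Fintype.card n := by
  rw [rank, LinearMap.finrank_range_add_finrank_ker, Module.finrank_fintype_fun_eq_card]

theorem mulVec_injective_of_rank_eq_card {v : Matrix m n K} (hv : v.rank = Fintype.card n) :
    Function.Injective v.mulVec := by
  have hker : Module.finrank K (LinearMap.ker v.mulVecLin) = 0 := by
    have := rank_add_finrank_ker_mulVecLin v
    omega
  exact LinearMap.ker_eq_bot.mp (Submodule.finrank_eq_zero.mp hker)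

variable [Fintype m] [DecidableEq m] [DecidableEq n]

theorem ker_sub_mul_inv_mul_eq_range {A : Matrix m m K} (hA : IsUnit A) {v : Matrix m n K}
    (hM : IsUnit (vᵀ * A * v).det) :
    LinearMap.ker (A - A * v * (vᵀ * A * v)⁻¹ * vᵀ * A).mulVecLin =
      LinearMap.range v.mulVecLin := by
  have hBv : (A - A * v * (vᵀ * A * v)⁻¹ * vᵀ * A) * v = 0 := by
    have : A * v * (vᵀ * A * v)⁻¹ * vᵀ * A * v = A * v * ((vᵀ * A * v)⁻¹ * (vᵀ * A * v)) := by
      simp only [Matrix.mul_assoc]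
    rw [Matrix.sub_mul, this, nonsing_inv_mul _ hM, Matrix.mul_one, sub_self]
  ext x
  simp only [LinearMap.mem_ker, LinearMap.mem_range, mulVecLin_apply]
  constructor
  · intro hx
    refine ⟨((vᵀ * A * v)⁻¹ * vᵀ * A) *ᵥ x, mulVec_injective_iff_isUnit.mpr hA ?_⟩
    rw [sub_mulVec, sub_eq_zero] at hx
    rw [mulVec_mulVec, mulVec_mulVec, hx]
    simp only [Matrix.mul_assoc]
  · rintro ⟨y, rfl⟩
    rw [mulVec_mulVec, hBv, zero_mulVec]

theorem rank_sub_mul_inv_mul {A : Matrix m m K} (hA : IsUnit A) {v : Matrix m n K}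
    (hM : IsUnit (vᵀ * A * v).det) :
    (A - A * v * (vᵀ * A * v)⁻¹ * vᵀ * A).rank = Fintype.card m - v.rank := by
  have := rank_add_finrank_ker_mulVecLin (A - A * v * (vᵀ * A * v)⁻¹ * vᵀ * A)
  rw [ker_sub_mul_inv_mul_eq_range hA hM] at this
  change _ + v.rank = _ at this
  omega

end Matrix

/-- `rank(A − A v (vᵀ A v)⁻¹ vᵀ A) = n − p`. -/
theorem orthogonal_component_rank
    {n p : ℕ} (A : Matrix (Fin n) (Fin n) ℝ) (hA : A.PosDef)
    (v : Matrix (Fin n) (Fin p) ℝ) (hv : v.rank = p) :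
    (A - A * v * (vᵀ * A * v)⁻¹ * vᵀ * A).rank = n - p := by
  have hv_inj : Function.Injective v.mulVec :=
    mulVec_injective_of_rank_eq_card (by rwa [Fintype.card_fin])
  have hM : (vᵀ * A * v).PosDef := by
    simpa only [conjTranspose_eq_transpose_of_trivial] using hA.conjTranspose_mul_mul_same hv_inj
  rw [rank_sub_mul_inv_mul hA.isUnit hM.det_pos.ne'.isUnit, hv, Fintype.card_fin]
end

section
/- Let S ⊆ ℝⁿ be a p-dimensional subspace and A ∈ ℝ^{n×n} positive definite. If a matrix Ã ∈ ℝ^{n×n} is symmetric, has rank p, and satisfies Ã x = A x for all x ∈ S, then Ã = A^{∥S} := A v (vᵀ A v)⁻¹ vᵀ A, where the columns of v form a basis of S. -/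
open Matrix

/-!
Since `Ã` agrees with `A` on `S`, its range contains `A S`, which has dimension `p = rank Ã`;
hence the ranges coincide and `Ã = A v C` for some `C`. Symmetry turns this into
`Ã = Cᵀ vᵀ A`, and evaluating on `v` gives `Cᵀ (vᵀ A v) = A v`, i.e. `Cᵀ = A v (vᵀ A v)⁻¹`,
the Gram matrix `vᵀ A v` being positive definite.
-/

namespace Matrix

variable {m n k R : Type*}

theorem mulVec_injective_of_rank_eq_card_s7 [Field R] [Fintype n] {M : Matrix m n R}
    (h : M.rank = Fintype.card n) : Function.Injective M.mulVec :=
  mulVec_injective_iff.mpr <| linearIndependent_iff_card_eq_finrank_span.mpr <| by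
    rw [← h, rank_eq_finrank_span_cols, Set.finrank]

theorem exists_mul_eq_of_range_mulVecLin_le [CommSemiring R] [Fintype n] [Fintype k]
    [DecidableEq k] {M : Matrix m n R} {B : Matrix m k R}
    (h : LinearMap.range B.mulVecLin ≤ LinearMap.range M.mulVecLin) :
    ∃ C : Matrix n k R, M * C = B := by
  have hcol (j : k) : ∃ c : n → R, M *ᵥ c = B.col j := by
    rw [← mulVec_single_one]
    exact h ⟨Pi.single j 1, rfl⟩
  choose c hc using hcol
  refine ⟨(of c)ᵀ, ext fun i j => ?_⟩
  simpa [mul_apply, mulVec, dotProduct] using congrFun (hc j) i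

end Matrix

/-- Uniqueness of `A^{∥S}`: if `Ã` is symmetric, has rank `p`, and agrees with `A` on `S`,
then `Ã = A v (vᵀ A v)⁻¹ vᵀ A`. -/
theorem parallel_component_unique
    {n p : ℕ} (A : Matrix (Fin n) (Fin n) ℝ) (hA : A.PosDef)
    (v : Matrix (Fin n) (Fin p) ℝ) (hv : v.rank = p)
    (At : Matrix (Fin n) (Fin n) ℝ)
    (hsymm : Atᵀ = At) (hrank : At.rank = p)
    (hagree : ∀ c : Fin p → ℝ, At *ᵥ (v *ᵥ c) = A *ᵥ (v *ᵥ c)) :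
    At = A * v * (vᵀ * A * v)⁻¹ * vᵀ * A := by
  set G := vᵀ * A * v
  have hG : IsUnit G.det := by
    have hv_inj := mulVec_injective_of_rank_eq_card_s7 (hv.trans (Fintype.card_fin p).symm)
    have := hA.conjTranspose_mul_mul_same hv_inj
    rw [conjTranspose_eq_transpose_of_trivial] at this
    exact this.det_pos.ne'.isUnit
  have hAtv : At * v = A * v := ext_iff_mulVec.mpr fun c => by
    simpa only [← mulVec_mulVec] using hagree c
  have hrange : LinearMap.range (A * v).mulVecLin = LinearMap.range At.mulVecLin := by
    refine Submodule.eq_of_le_of_finrank_eq ?_ ?_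
    · rw [← hAtv, mulVecLin_mul]
      exact LinearMap.range_comp_le_range _ _
    · change (A * v).rank = At.rank
      rw [rank_mul_eq_right_of_isUnit_det A v hA.det_pos.ne'.isUnit, hv, hrank]
  obtain ⟨C, hC⟩ := exists_mul_eq_of_range_mulVecLin_le hrange.ge
  have hAt : At = Cᵀ * (vᵀ * A) := by
    have hA_symm : Aᵀ = A := hA.isHermitian
    rw [← hsymm, ← hC, transpose_mul, transpose_mul, hA_symm]
  have hCt : Cᵀ = A * v * G⁻¹ :=
    calc Cᵀ = Cᵀ * G * G⁻¹ := (mul_nonsing_inv_cancel_right G Cᵀ hG).symm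
      _ = At * v * G⁻¹ := by rw [hAt]; simp only [G, Matrix.mul_assoc]
      _ = A * v * G⁻¹ := by rw [hAtv]
  rw [hAt, hCt]
  simp only [Matrix.mul_assoc]
end

section
/- Let R ∈ ℝ^{n×n} be positive definite, λ ∈ (0,1), and φ̄ ∈ ℝ^{q×n} have full row rank q. Then R̄ := R − (1−λ) R φ̄ᵀ (φ̄ R φ̄ᵀ)⁻¹ φ̄ R is positive definite, and R̄ ⪰ λ R. -/
/-! The matrix `R̄` interpolates between `R` and the Schur complement `R - R φᵀ (φ R φᵀ)⁻¹ φ R`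
of the positive semidefinite block matrix `[φ; 1] R [φ; 1]ᵀ`:
`R̄ = λ R + (1 - λ) (R - R φᵀ (φ R φᵀ)⁻¹ φ R)`. The Schur complement is positive semidefinite,
so `R̄ - λ R` is too, and `R̄` is positive definite as `λ R` is. -/

open Matrix

namespace Matrix

theorem vecMul_injective_of_rank_eq_card {m n K : Type*} [Fintype m] [Fintype n] [Field K]
    {M : Matrix m n K} (hM : M.rank = Fintype.card m) : Function.Injective M.vecMul := by
  rw [vecMul_injective_iff, linearIndependent_iff_card_eq_finrank_span, ← hM,
    rank_eq_finrank_span_row]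
  rfl

section SchurComplement

variable {m n : Type*} [Fintype m] [Fintype n] [DecidableEq n]

theorem PosSemidef.fromBlocks_mul_mul_conjTranspose {K : Type*} [CommRing K] [PartialOrder K]
    [StarRing K] {R : Matrix n n K} (hR : R.PosSemidef) (B : Matrix m n K) :
    (fromBlocks (B * R * Bᴴ) (B * R) (B * R)ᴴ R).PosSemidef := by
  have hB := hR.mul_mul_conjTranspose_same (fromRows B (1 : Matrix n n K))
  rw [conjTranspose_fromRows_eq_fromCols_conjTranspose, fromRows_mul, fromRows_mul_fromCols]
    at hB
  simpa only [Matrix.mul_one, Matrix.one_mul, conjTranspose_one, conjTranspose_mul,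
    hR.isHermitian.eq, Matrix.mul_assoc] using hB

theorem PosSemidef.sub_mul_conjTranspose_mul_inv_mul_mul [DecidableEq m] {K : Type*} [Field K]
    [PartialOrder K] [StarRing K] [StarOrderedRing K] {R : Matrix n n K}
    (hR : R.PosSemidef) {B : Matrix m n K} (hS : (B * R * Bᴴ).PosDef) :
    (R - R * Bᴴ * (B * R * Bᴴ)⁻¹ * B * R).PosSemidef := by
  have := hS.isUnit.invertible
  have hSchur := (PosDef.fromBlocks₁₁ (B * R) R hS).mp (hR.fromBlocks_mul_mul_conjTranspose B)
  simpa only [conjTranspose_mul, hR.isHermitian.eq, Matrix.mul_assoc] using hSchur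

end SchurComplement

end Matrix

/-- The SIFted information matrix `R̄ = R − (1−λ) R φ̄ᵀ (φ̄ R φ̄ᵀ)⁻¹ φ̄ R` is positive
definite and satisfies `R̄ ⪰ λ R`. -/
theorem sifted_information_posDef
    {n q : ℕ} (lam : ℝ) (hlam : lam ∈ Set.Ioo (0:ℝ) 1)
    (R : Matrix (Fin n) (Fin n) ℝ) (hR : R.PosDef)
    (φ : Matrix (Fin q) (Fin n) ℝ) (hφ : φ.rank = q) :
    (R - (1 - lam) • (R * φᵀ * (φ * R * φᵀ)⁻¹ * φ * R)).PosDef ∧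
    ((R - (1 - lam) • (R * φᵀ * (φ * R * φᵀ)⁻¹ * φ * R)) - lam • R).PosSemidef := by
  obtain ⟨hlam₀, hlam₁⟩ := hlam
  have hS : (φ * R * φᵀ).PosDef := by
    simpa only [conjTranspose_eq_transpose_of_trivial] using
      hR.mul_mul_conjTranspose_same (vecMul_injective_of_rank_eq_card (by simpa using hφ))
  have hSchur : (R - R * φᵀ * (φ * R * φᵀ)⁻¹ * φ * R).PosSemidef := by
    simpa only [conjTranspose_eq_transpose_of_trivial] using
      hR.posSemidef.sub_mul_conjTranspose_mul_inv_mul_mul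
        (by simpa only [conjTranspose_eq_transpose_of_trivial] using hS)
  have hgap := hSchur.smul (sub_nonneg.mpr hlam₁.le)
  set P := R * φᵀ * (φ * R * φᵀ)⁻¹ * φ * R
  have hsplit : R - (1 - lam) • P = lam • R + (1 - lam) • (R - P) := by module
  refine ⟨hsplit ▸ (hR.smul hlam₀).add_posSemidef hgap, ?_⟩
  rwa [hsplit, add_sub_cancel_left]
end

section
/- Let R ∈ ℝ^{n×n} be positive definite, λ ∈ (0,1), and φ̄ ∈ ℝ^{q×n} have full row rank. Then (R − (1−λ) R φ̄ᵀ (φ̄ R φ̄ᵀ)⁻¹ φ̄ R)⁻¹ = R⁻¹ + ((1−λ)/λ) φ̄ᵀ (φ̄ R φ̄ᵀ)⁻¹ φ̄. -/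
/-!
Write `S = φ̄ R φ̄ᵀ` and `P = φ̄ᵀ S⁻¹ φ̄`. From `S⁻¹ S S⁻¹ = S⁻¹` we get `P R P = P`, and this is all
that is needed: with `c = 1 − λ` and `d = c / λ`,
`(R − c R P R)(R⁻¹ + d P) = 1 + (d − c − c d) R P`, and `d − c − c d = d λ − c = 0`.
-/

open Matrix

namespace Matrix

variable {n K : Type*} [Fintype n] [DecidableEq n] [Field K]

theorem nonsing_inv_mul_mul_nonsing_inv (A : Matrix n n K) : A⁻¹ * A * A⁻¹ = A⁻¹ := by
  by_cases hA : IsUnit A.det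
  · rw [nonsing_inv_mul A hA, Matrix.one_mul]
  · rw [nonsing_inv_apply_not_isUnit A hA, Matrix.zero_mul, Matrix.zero_mul]

theorem inv_sub_smul_mul_mul_eq {R P : Matrix n n K} (hR : IsUnit R.det) (hP : P * R * P = P)
    {lam : K} (hlam : lam ≠ 0) :
    (R - (1 - lam) • (R * P * R))⁻¹ = R⁻¹ + ((1 - lam) / lam) • P := by
  apply inv_eq_right_inv
  have hRP : R * P * R * P = R * P := by rw [Matrix.mul_assoc R P R, Matrix.mul_assoc, hP]
  calc (R - (1 - lam) • (R * P * R)) * (R⁻¹ + ((1 - lam) / lam) • P)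
      = 1 + ((1 - lam) / lam - (1 - lam) - (1 - lam) * ((1 - lam) / lam)) • (R * P) := by
        simp only [Matrix.sub_mul, Matrix.mul_add, Matrix.smul_mul, Matrix.mul_smul,
          mul_nonsing_inv R hR, R.mul_nonsing_inv_cancel_right _ hR, hRP]
        module
    _ = 1 := by
        rw [show (1 - lam) / lam - (1 - lam) - (1 - lam) * ((1 - lam) / lam) = 0 by
          field_simp; ring, zero_smul, add_zero]

end Matrix

theorem sifted_covariance_inverse_general
    {n q : ℕ} (lam : ℝ) (hlam : lam ∈ Set.Ioo (0:ℝ) 1)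
    (R : Matrix (Fin n) (Fin n) ℝ) (hR : R.PosDef)
    (φ : Matrix (Fin q) (Fin n) ℝ) :
    (R - (1 - lam) • (R * φᵀ * (φ * R * φᵀ)⁻¹ * φ * R))⁻¹
      = R⁻¹ + ((1 - lam) / lam) • (φᵀ * (φ * R * φᵀ)⁻¹ * φ) := by
  have hP : φᵀ * (φ * R * φᵀ)⁻¹ * φ * R * (φᵀ * (φ * R * φᵀ)⁻¹ * φ)
      = φᵀ * (φ * R * φᵀ)⁻¹ * φ := by
    simpa only [Matrix.mul_assoc] using
      congrArg (fun X => φᵀ * X * φ) (nonsing_inv_mul_mul_nonsing_inv (φ * R * φᵀ))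
  simpa only [Matrix.mul_assoc] using
    inv_sub_smul_mul_mul_eq ((isUnit_iff_isUnit_det R).mp hR.isUnit) hP hlam.1.ne'

/-- Matrix inversion lemma form of the SIFted covariance matrix:
`(R − (1−λ) R φ̄ᵀ (φ̄ R φ̄ᵀ)⁻¹ φ̄ R)⁻¹ = R⁻¹ + ((1−λ)/λ) φ̄ᵀ (φ̄ R φ̄ᵀ)⁻¹ φ̄`. -/
theorem sifted_covariance_inverse
    {n q : ℕ} (lam : ℝ) (hlam : lam ∈ Set.Ioo (0:ℝ) 1)
    (R : Matrix (Fin n) (Fin n) ℝ) (hR : R.PosDef)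
    (φ : Matrix (Fin q) (Fin n) ℝ) (hφ : φ.rank = q) :
    (R - (1 - lam) • (R * φᵀ * (φ * R * φᵀ)⁻¹ * φ * R))⁻¹
      = R⁻¹ + ((1 - lam) / lam) • (φᵀ * (φ * R * φᵀ)⁻¹ * φ) :=
  sifted_covariance_inverse_general lam hlam R hR φ
end

section
/- Let R ∈ ℝ^{n×n} be positive definite and φ̄ ∈ ℝ^{q×n} have full row rank q. Then every nonzero eigenvalue of R^{⊥} := R − R φ̄ᵀ (φ̄ R φ̄ᵀ)⁻¹ φ̄ R lies in the interval [λ_min(R), λ_max(R)], and R^{⊥} has exactly n − q nonzero eigenvalues. -/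
/-!
Write `R = S²` with `S = √R` invertible and put `A = S φᵀ`, so that `φ R φᵀ = Aᵀ A` is invertible
and `R^⊥ = S (1 - P) S` with `P = A (Aᵀ A)⁻¹ Aᵀ` the orthogonal projection onto the column space
of `A`, of rank `q`. Hence `rank R^⊥ = rank (1 - P) = n - q`. The nonzero spectrum of
`S (1 - P) S` is that of `(1 - P) R`, and an eigenvector `v` of `(1 - P) R` for `μ ≠ 0` is fixed
by `1 - P`, so that `μ = vᵀ R v / vᵀ v` is a Rayleigh quotient of `R`.
-/

open Matrix
open scoped MatrixOrder

namespace Matrix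

section Field

variable {m n K : Type*} [Fintype m] [Fintype n] [DecidableEq n] [Field K]

theorem isUnit_of_rank_eq_card {A : Matrix n n K} (h : A.rank = Fintype.card n) : IsUnit A := by
  rw [← mulVec_surjective_iff_isUnit]
  exact LinearMap.range_eq_top.1 <| Submodule.eq_top_of_finrank_eq (V := n → K) <| by
    rwa [Module.finrank_fintype_fun_eq_card]

theorem rank_one_sub_of_isIdempotentElem {P : Matrix n n K} (hP : IsIdempotentElem P) :
    (1 - P).rank = Fintype.card n - P.rank := by
  have hP' : IsIdempotentElem P.mulVecLin := by
    rw [IsIdempotentElem, Module.End.mul_eq_comp, ← mulVecLin_mul, hP.eq]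
  have hsub : (1 - P).mulVecLin = 1 - P.mulVecLin := by
    ext; simp
  have hsum := LinearMap.finrank_range_add_finrank_ker P.mulVecLin
  rw [Module.finrank_fintype_fun_eq_card] at hsum
  rw [rank, rank, hsub, ← LinearMap.IsIdempotentElem.ker_eq_range_one_sub hP']
  omega

theorem exists_mulVec_eq_smul_of_mem_spectrum {M : Matrix n n K} {μ : K}
    (h : μ ∈ spectrum K M) : ∃ v ≠ 0, M *ᵥ v = μ • v := by
  rw [← spectrum_toLin', ← Module.End.hasEigenvalue_iff_mem_spectrum] at h
  obtain ⟨v, hv⟩ := h.exists_hasEigenvector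
  exact ⟨v, hv.2, by simpa using hv.apply_eq_smul⟩

noncomputable def colSpaceProj (A : Matrix m n K) : Matrix m m K := A * (Aᵀ * A)⁻¹ * Aᵀ

theorem transpose_colSpaceProj (A : Matrix m n K) : (colSpaceProj A)ᵀ = colSpaceProj A := by
  simp only [colSpaceProj, transpose_mul, transpose_transpose, transpose_nonsing_inv,
    Matrix.mul_assoc]

theorem colSpaceProj_mul_self {A : Matrix m n K} (hA : IsUnit (Aᵀ * A)) :
    colSpaceProj A * A = A := by
  rw [colSpaceProj, Matrix.mul_assoc, Matrix.mul_assoc,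
    nonsing_inv_mul _ ((isUnit_iff_isUnit_det _).1 hA), Matrix.mul_one]

theorem isIdempotentElem_colSpaceProj {A : Matrix m n K} (hA : IsUnit (Aᵀ * A)) :
    IsIdempotentElem (colSpaceProj A) := by
  rw [IsIdempotentElem]
  conv_lhs => enter [2]; rw [colSpaceProj]
  rw [← Matrix.mul_assoc, ← Matrix.mul_assoc, colSpaceProj_mul_self hA, colSpaceProj]

theorem rank_colSpaceProj {A : Matrix m n K} (hA : IsUnit (Aᵀ * A)) :
    (colSpaceProj A).rank = A.rank :=
  le_antisymm (by rw [colSpaceProj, Matrix.mul_assoc]; exact rank_mul_le_left _ _) <|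
    calc A.rank = (colSpaceProj A * A).rank := by rw [colSpaceProj_mul_self hA]
      _ ≤ (colSpaceProj A).rank := rank_mul_le_left _ _

theorem sub_mul_inv_mul_eq_mul_one_sub_colSpaceProj_mul {q : Type*} [Fintype q] [DecidableEq q]
    {S R : Matrix n n K} (hS : Sᵀ = S) (hSS : S * S = R) (φ : Matrix q n K) :
    R - R * φᵀ * (φ * R * φᵀ)⁻¹ * φ * R = S * (1 - colSpaceProj (S * φᵀ)) * S := by
  subst hSS
  simp only [colSpaceProj, transpose_mul, transpose_transpose, hS, mul_sub, sub_mul,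
    Matrix.mul_one, Matrix.mul_assoc]

end Field

section Real

variable {n : Type*} [Fintype n] [DecidableEq n]

theorem PosDef.exists_transpose_eq_mul_self_eq_isUnit {R : Matrix n n ℝ} (hR : R.PosDef) :
    ∃ S : Matrix n n ℝ, Sᵀ = S ∧ S * S = R ∧ IsUnit S :=
  ⟨CFC.sqrt R, (CFC.sqrt_nonneg R).posSemidef.isHermitian,
    CFC.sqrt_mul_sqrt_self R hR.posSemidef.nonneg,
    CFC.isUnit_sqrt_iff_isStrictlyPositive.2 hR.isStrictlyPositive⟩

theorem PosSemidef.mul_dotProduct_self_le {R : Matrix n n ℝ} {a : ℝ}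
    (h : (R - a • 1).PosSemidef) (v : n → ℝ) : a * (v ⬝ᵥ v) ≤ v ⬝ᵥ (R *ᵥ v) := by
  have := h.dotProduct_mulVec_nonneg v
  simp only [star_trivial, sub_mulVec, smul_mulVec, one_mulVec, dotProduct_sub,
    dotProduct_smul, smul_eq_mul] at this
  linarith

theorem PosSemidef.dotProduct_mulVec_le {R : Matrix n n ℝ} {b : ℝ}
    (h : (b • 1 - R).PosSemidef) (v : n → ℝ) : v ⬝ᵥ (R *ᵥ v) ≤ b * (v ⬝ᵥ v) := by
  have := h.dotProduct_mulVec_nonneg v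
  simp only [star_trivial, sub_mulVec, smul_mulVec, one_mulVec, dotProduct_sub,
    dotProduct_smul, smul_eq_mul] at this
  linarith

variable {Q R : Matrix n n ℝ} {a b μ : ℝ}

theorem mem_Icc_of_mem_spectrum_mul (hQ : Qᵀ = Q) (hQQ : IsIdempotentElem Q)
    (ha : (R - a • 1).PosSemidef) (hb : (b • 1 - R).PosSemidef)
    (hμ : μ ∈ spectrum ℝ (Q * R)) (hμ0 : μ ≠ 0) : μ ∈ Set.Icc a b := by
  obtain ⟨v, hv0, hv⟩ := exists_mulVec_eq_smul_of_mem_spectrum hμ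
  have hQv : Q *ᵥ v = v := by
    refine smul_right_injective _ hμ0 (?_ : μ • (Q *ᵥ v) = μ • v)
    rw [← mulVec_smul, ← hv, mulVec_mulVec, ← Matrix.mul_assoc, hQQ.eq]
  have hRayleigh : v ⬝ᵥ (R *ᵥ v) = μ * (v ⬝ᵥ v) :=
    calc v ⬝ᵥ (R *ᵥ v) = (Q *ᵥ v) ⬝ᵥ (R *ᵥ v) := by rw [hQv]
      _ = v ⬝ᵥ ((Q * R) *ᵥ v) := by
        rw [← vecMul_transpose, hQ, ← dotProduct_mulVec, mulVec_mulVec]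
      _ = μ * (v ⬝ᵥ v) := by rw [hv, dotProduct_smul, smul_eq_mul]
  have hvv : 0 < v ⬝ᵥ v := by simpa using dotProduct_star_self_pos_iff.2 hv0
  constructor
  · exact le_of_mul_le_mul_right (hRayleigh ▸ ha.mul_dotProduct_self_le v) hvv
  · exact le_of_mul_le_mul_right (hRayleigh ▸ hb.dotProduct_mulVec_le v) hvv

theorem mem_Icc_of_mem_spectrum_mul_mul {S : Matrix n n ℝ} (hQ : Qᵀ = Q)
    (hQQ : IsIdempotentElem Q) (ha : (S * S - a • 1).PosSemidef)
    (hb : (b • 1 - S * S).PosSemidef) (hμ : μ ∈ spectrum ℝ (S * Q * S)) (hμ0 : μ ≠ 0) :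
    μ ∈ Set.Icc a b := by
  have hswap := spectrum.nonzero_mul_comm (𝕜 := ℝ) S (Q * S)
  rw [← Matrix.mul_assoc, Matrix.mul_assoc Q] at hswap
  have hμ' : μ ∈ spectrum ℝ (Q * (S * S)) \ {0} := hswap ▸ ⟨hμ, hμ0⟩
  exact mem_Icc_of_mem_spectrum_mul hQ hQQ ha hb hμ'.1 hμ0

end Real

end Matrix

/-- Every nonzero eigenvalue of `R^⊥ = R − R φ̄ᵀ (φ̄ R φ̄ᵀ)⁻¹ φ̄ R` lies in
`[λ_min(R), λ_max(R)]` (expressed via any Loewner bounds `a Iₙ ⪯ R ⪯ b Iₙ`), and `R^⊥`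
has exactly `n − q` nonzero eigenvalues (its rank, as a PSD matrix, is `n − q`). -/
theorem orthogonal_part_nonzero_eigenvalue_bounds
    {n q : ℕ} (R : Matrix (Fin n) (Fin n) ℝ) (hR : R.PosDef)
    (φ : Matrix (Fin q) (Fin n) ℝ) (hφ : φ.rank = q) :
    (R - R * φᵀ * (φ * R * φᵀ)⁻¹ * φ * R).rank = n - q ∧
    ∀ a b : ℝ,
      (R - a • (1 : Matrix (Fin n) (Fin n) ℝ)).PosSemidef →
      (b • (1 : Matrix (Fin n) (Fin n) ℝ) - R).PosSemidef →
      ∀ μ ∈ spectrum ℝ (R - R * φᵀ * (φ * R * φᵀ)⁻¹ * φ * R),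
        μ ≠ 0 → a ≤ μ ∧ μ ≤ b := by
  obtain ⟨S, hS, hSS, hSunit⟩ := hR.exists_transpose_eq_mul_self_eq_isUnit
  have hSdet := (isUnit_iff_isUnit_det S).1 hSunit
  have hA : (S * φᵀ).rank = q := by
    rw [rank_mul_eq_right_of_isUnit_det _ _ hSdet, rank_transpose, hφ]
  have hAA : IsUnit ((S * φᵀ)ᵀ * (S * φᵀ)) :=
    isUnit_of_rank_eq_card (by rw [rank_transpose_mul_self, hA, Fintype.card_fin])
  have hP := isIdempotentElem_colSpaceProj hAA
  rw [sub_mul_inv_mul_eq_mul_one_sub_colSpaceProj_mul hS hSS]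
  refine ⟨?_, fun a b ha hb μ hμ hμ0 => ?_⟩
  · rw [rank_mul_eq_left_of_isUnit_det _ _ hSdet, rank_mul_eq_right_of_isUnit_det _ _ hSdet,
      rank_one_sub_of_isIdempotentElem hP, rank_colSpaceProj hAA, hA, Fintype.card_fin]
  · subst hSS
    exact mem_Icc_of_mem_spectrum_mul_mul
      (by rw [transpose_sub, transpose_one, transpose_colSpaceProj]) hP.one_sub ha hb hμ hμ0
end

section
/- Let λ ∈ (0,1), ε > 0, and R₀ ∈ ℝ^{n×n} positive definite. For each k, let φ̄ₖ ∈ ℝ^{q_k×n} be a matrix all of whose singular values are ≥ √ε (possibly q_k = 0), and define R_{k+1} = Rₖ − (1−λ) Rₖ φ̄ₖᵀ (φ̄ₖ Rₖ φ̄ₖᵀ)⁻¹ φ̄ₖ Rₖ + φ̄ₖᵀ φ̄ₖ. Then for all k ≥ 0, λ_min(Rₖ) ≥ min{ε/(1−λ), λ_min(R₀)}. -/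
/-!
Write `P` for the orthogonal projection onto the row space of `φ̄` and `S = φ̄ R φ̄ᵀ`. The update
is `R' = λ R + (1 - λ) (R - R φ̄ᵀ S⁻¹ φ̄ R) + φ̄ᵀ φ̄`. With `C = I - φ̄ᵀ S⁻¹ φ̄ R` the middle term is
`Cᵀ R C`, and `(I - P) C = I - P` gives `Cᵀ C = Cᵀ P C + (I - P)`; hence `c I ⪯ R` with `c ≥ 0`
implies `c (I - P) ⪯ R - R φ̄ᵀ S⁻¹ φ̄ R`. The singular value bound `ε I ⪯ φ̄ φ̄ᵀ` gives
`ε P ⪯ φ̄ᵀ φ̄`, so if moreover `(1 - λ) c ≤ ε` then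
`R' ⪰ λ c I + (1 - λ) c (I - P) + (1 - λ) c P = c I`. Induction on `k` with
`c = min (ε / (1 - λ)) a` proves the claim.
-/

open Matrix

open scoped MatrixOrder

namespace Matrix

variable {m n : Type*}

lemma posDef_of_smul_one_le [DecidableEq n] {A : Matrix n n ℝ} {ε : ℝ} (hε : 0 < ε)
    (h : ε • 1 ≤ A) : A.PosDef := by
  simpa using PosDef.posSemidef_add (le_iff.mp h) (PosDef.one.smul hε)

variable [Fintype m] [Fintype n]

lemma PosSemidef.transpose_mul_mul_same {A : Matrix m m ℝ} (hA : A.PosSemidef)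
    (B : Matrix m n ℝ) : (Bᵀ * A * B).PosSemidef := by
  simpa [conjTranspose_eq_transpose_of_trivial] using hA.conjTranspose_mul_mul_same B

lemma smul_le_mul_self_of_smul_one_le [DecidableEq n] {G : Matrix n n ℝ} {ε : ℝ} (hε : 0 ≤ ε)
    (h : ε • 1 ≤ G) : ε • G ≤ G * G := by
  set D := G - ε • 1
  have hD : D.PosSemidef := h
  have key : G * G - ε • G = Dᵀ * 1 * D + ε • D := by
    rw [(isHermitian_iff_isSymm.mp hD.isHermitian).eq]
    simp only [D, sub_mul, mul_sub, Matrix.mul_one, Matrix.one_mul, Matrix.smul_mul,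
      Matrix.mul_smul, smul_sub]
    module
  rw [le_iff, key]
  exact (PosSemidef.one.transpose_mul_mul_same D).add (hD.smul hε)

variable [DecidableEq m]

lemma vecMul_injective_of_isUnit_mul {α : Type*} [CommRing α] {A : Matrix m n α}
    {B : Matrix n m α} (h : IsUnit (A * B)) : Function.Injective A.vecMul := by
  refine Function.Injective.of_comp (f := B.vecMul) ?_
  simpa [Function.comp_def, vecMul_vecMul] using vecMul_injective_of_isUnit h

lemma PosDef.mul_mul_transpose_of_isUnit {R : Matrix n n ℝ} (hR : R.PosDef)
    {φ : Matrix m n ℝ} (hφ : IsUnit (φ * φᵀ)) : (φ * R * φᵀ).PosDef := by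
  simpa [conjTranspose_eq_transpose_of_trivial] using
    hR.mul_mul_conjTranspose_same (vecMul_injective_of_isUnit_mul hφ)

/-- The orthogonal projection onto the row space of `φ`, when `φ` has full row rank. -/
noncomputable def rowProj (φ : Matrix m n ℝ) : Matrix n n ℝ := φᵀ * (φ * φᵀ)⁻¹ * φ

lemma rowProj_nonneg (φ : Matrix m n ℝ) : 0 ≤ rowProj φ := by
  have hG : (φ * φᵀ).PosSemidef := by
    simpa [conjTranspose_eq_transpose_of_trivial] using posSemidef_self_mul_conjTranspose φ
  exact (hG.inv.transpose_mul_mul_same φ).nonneg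

lemma transpose_rowProj (φ : Matrix m n ℝ) : (rowProj φ)ᵀ = rowProj φ := by
  simp [rowProj, transpose_nonsing_inv, Matrix.mul_assoc]

lemma rowProj_mul_transpose {φ : Matrix m n ℝ} (hφ : IsUnit (φ * φᵀ)) :
    rowProj φ * φᵀ = φᵀ := by
  rw [rowProj, Matrix.mul_assoc (φᵀ * _)]
  exact nonsing_inv_mul_cancel_right _ _ ((isUnit_iff_isUnit_det _).mp hφ)

lemma smul_rowProj_le_transpose_mul_self {φ : Matrix m n ℝ} {ε : ℝ} (hε : 0 < ε)
    (h : ε • 1 ≤ φ * φᵀ) : ε • rowProj φ ≤ φᵀ * φ := by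
  rw [rowProj]
  set G := φ * φᵀ
  have hG : IsUnit G.det := (isUnit_iff_isUnit_det _).mp (posDef_of_smul_one_le hε h).isUnit
  have hGt : Gᵀ = G := by simp [G]
  have key : φᵀ * φ - ε • (φᵀ * G⁻¹ * φ) = (G⁻¹ * φ)ᵀ * (G * G - ε • G) * (G⁻¹ * φ) := by
    simp only [transpose_mul, transpose_nonsing_inv, hGt, Matrix.mul_sub, Matrix.sub_mul,
      Matrix.mul_smul, Matrix.smul_mul, Matrix.mul_assoc, nonsing_inv_mul_cancel_left _ _ hG,
      mul_nonsing_inv_cancel_left _ _ hG]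
  rw [le_iff, key]
  exact (le_iff.mp (smul_le_mul_self_of_smul_one_le hε.le h)).transpose_mul_mul_same _

lemma one_sub_rowProj_mul_transpose [DecidableEq n] {φ : Matrix m n ℝ}
    (hφ : IsUnit (φ * φᵀ)) : (1 - rowProj φ) * φᵀ = 0 := by
  rw [Matrix.sub_mul, Matrix.one_mul, rowProj_mul_transpose hφ, sub_self]

lemma smul_one_sub_rowProj_le [DecidableEq n] {R : Matrix n n ℝ} (hR : R.PosDef)
    {φ : Matrix m n ℝ} (hφ : IsUnit (φ * φᵀ)) {c : ℝ} (hc : 0 ≤ c) (h : c • 1 ≤ R) :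
    c • (1 - rowProj φ) ≤ R - R * φᵀ * (φ * R * φᵀ)⁻¹ * φ * R := by
  set S := φ * R * φᵀ
  set P := rowProj φ
  have hS : IsUnit S.det :=
    (isUnit_iff_isUnit_det _).mp (hR.mul_mul_transpose_of_isUnit hφ).isUnit
  have hRt : Rᵀ = R := (isHermitian_iff_isSymm.mp hR.isHermitian).eq
  have hSt : Sᵀ = S := by simp [S, hRt, Matrix.mul_assoc]
  set C := 1 - φᵀ * (S⁻¹ * φ * R)
  have hCt : Cᵀ = 1 - R * φᵀ * S⁻¹ * φ := by
    simp [C, transpose_nonsing_inv, hSt, hRt, Matrix.mul_assoc]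
  have hCRC : Cᵀ * R * C = R - R * φᵀ * S⁻¹ * φ * R := by
    have hcancel : ∀ X : Matrix m n ℝ, S⁻¹ * (φ * (R * (φᵀ * X))) = X := fun X => by
      simpa only [S, Matrix.mul_assoc] using nonsing_inv_mul_cancel_left S X hS
    rw [hCt]
    simp only [C, Matrix.sub_mul, Matrix.mul_sub, Matrix.one_mul, Matrix.mul_one,
      Matrix.mul_assoc, hcancel]
    abel
  have hPC : (1 - P) * C = 1 - P := by
    rw [Matrix.mul_sub, Matrix.mul_one, ← Matrix.mul_assoc, one_sub_rowProj_mul_transpose hφ,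
      Matrix.zero_mul, sub_zero]
  have hCPC : Cᵀ * (1 - P) * C = 1 - P := by
    have hPt : (1 - P)ᵀ = 1 - P := by simp [P, transpose_rowProj]
    rw [Matrix.mul_assoc, hPC, ← hPt, ← transpose_mul, hPC]
  have key : R - R * φᵀ * S⁻¹ * φ * R - c • (1 - P) =
      Cᵀ * (R - c • 1) * C + c • (Cᵀ * P * C) := by
    rw [← hCRC, ← hCPC]
    simp only [Matrix.sub_mul, Matrix.mul_sub, Matrix.mul_smul, Matrix.smul_mul, Matrix.mul_one]
    module
  rw [le_iff, key]
  exact ((le_iff.mp h).transpose_mul_mul_same C).add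
    (((rowProj_nonneg φ).posSemidef.transpose_mul_mul_same C).smul hc)

end Matrix

section SiftRLS

variable {m n : Type*} [Fintype m] [Fintype n] [DecidableEq m]

noncomputable def siftRLSUpdate (lam : ℝ) (φ : Matrix m n ℝ) (R : Matrix n n ℝ) : Matrix n n ℝ :=
  R - (1 - lam) • (R * φᵀ * (φ * R * φᵀ)⁻¹ * φ * R) + φᵀ * φ

lemma siftRLSUpdate_eq (lam : ℝ) (φ : Matrix m n ℝ) (R : Matrix n n ℝ) :
    siftRLSUpdate lam φ R =
      lam • R + (1 - lam) • (R - R * φᵀ * (φ * R * φᵀ)⁻¹ * φ * R) + φᵀ * φ := by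
  rw [siftRLSUpdate]
  module

lemma posDef_siftRLSUpdate [DecidableEq n] {lam : ℝ} (h0 : 0 < lam) (h1 : lam ≤ 1)
    {φ : Matrix m n ℝ} (hφ : IsUnit (φ * φᵀ)) {R : Matrix n n ℝ} (hR : R.PosDef) :
    (siftRLSUpdate lam φ R).PosDef := by
  have hschur : 0 ≤ R - R * φᵀ * (φ * R * φᵀ)⁻¹ * φ * R := by
    simpa using smul_one_sub_rowProj_le hR hφ le_rfl (by simpa using hR.posSemidef.nonneg)
  have hφφ : (φᵀ * φ).PosSemidef := by
    simpa using PosSemidef.one.transpose_mul_mul_same φ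
  rw [siftRLSUpdate_eq]
  exact ((hR.smul h0).add_posSemidef (hschur.posSemidef.smul (sub_nonneg.2 h1))).add_posSemidef
    hφφ

lemma smul_one_le_siftRLSUpdate [DecidableEq n] {lam ε c : ℝ} (h0 : 0 < lam) (h1 : lam ≤ 1)
    (hε : 0 < ε) (hcε : (1 - lam) * c ≤ ε) {φ : Matrix m n ℝ} (hφ : ε • 1 ≤ φ * φᵀ)
    {R : Matrix n n ℝ} (hR : R.PosDef) (hc : c • 1 ≤ R) : c • 1 ≤ siftRLSUpdate lam φ R := by
  have hG : IsUnit (φ * φᵀ) := (posDef_of_smul_one_le hε hφ).isUnit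
  rcases le_or_gt c 0 with hc0 | hc0
  · calc c • (1 : Matrix n n ℝ) ≤ 0 := smul_nonpos_of_nonpos_of_nonneg hc0 zero_le_one
      _ ≤ _ := (posDef_siftRLSUpdate h0 h1 hG hR).posSemidef.nonneg
  calc c • (1 : Matrix n n ℝ)
      = lam • (c • 1) + (1 - lam) • (c • (1 - rowProj φ)) + ((1 - lam) * c) • rowProj φ := by
        module
    _ ≤ lam • R + (1 - lam) • (R - R * φᵀ * (φ * R * φᵀ)⁻¹ * φ * R) + ε • rowProj φ := by
        gcongr
        · exact smul_one_sub_rowProj_le hR hG hc0.le hc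
        · exact rowProj_nonneg φ
    _ ≤ lam • R + (1 - lam) • (R - R * φᵀ * (φ * R * φᵀ)⁻¹ * φ * R) + φᵀ * φ := by
        gcongr
        exact smul_rowProj_le_transpose_mul_self hε hφ
    _ = siftRLSUpdate lam φ R := (siftRLSUpdate_eq lam φ R).symm

end SiftRLS

/-- Singular values `≥ √ε` are encoded as `ε I ⪯ φ̄ₖ φ̄ₖᵀ`, and `λ_min(Rₖ) ≥ b` as `b I ⪯ Rₖ`, the
bound being proved for every `a` with `a I ⪯ R₀`. -/
theorem sift_rls_information_lower_bound
    {n : ℕ} (lam : ℝ) (hlam : lam ∈ Set.Ioo (0:ℝ) 1)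
    (ε : ℝ) (hε : 0 < ε)
    (q : ℕ → ℕ) (φ : (k : ℕ) → Matrix (Fin (q k)) (Fin n) ℝ)
    (hφ : ∀ k, (φ k * (φ k)ᵀ - ε • (1 : Matrix (Fin (q k)) (Fin (q k)) ℝ)).PosSemidef)
    (R : ℕ → Matrix (Fin n) (Fin n) ℝ) (hR0 : (R 0).PosDef)
    (hrec : ∀ k, R (k + 1) =
      R k - (1 - lam) • (R k * (φ k)ᵀ * (φ k * R k * (φ k)ᵀ)⁻¹ * φ k * R k)
        + (φ k)ᵀ * φ k) :
    ∀ a : ℝ, (R 0 - a • (1 : Matrix (Fin n) (Fin n) ℝ)).PosSemidef →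
      ∀ k, (R k - min (ε / (1 - lam)) a • (1 : Matrix (Fin n) (Fin n) ℝ)).PosSemidef := by
  intro a ha k
  obtain ⟨hlam0, hlam1⟩ := hlam
  set c := min (ε / (1 - lam)) a
  have hcε : (1 - lam) * c ≤ ε := (le_div_iff₀' (sub_pos.2 hlam1)).1 (min_le_left _ _)
  have hbound : ∀ k, (R k).PosDef ∧ c • 1 ≤ R k := by
    intro k
    induction k with
    | zero => exact ⟨hR0, (smul_le_smul_of_nonneg_right (min_le_right _ _) zero_le_one).trans ha⟩
    | succ k ih =>
      rw [hrec k]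
      exact ⟨posDef_siftRLSUpdate hlam0 hlam1.le ((posDef_of_smul_one_le hε (hφ k)).isUnit) ih.1,
        smul_one_le_siftRLSUpdate hlam0 hlam1.le hε hcε (hφ k) ih.1 ih.2⟩
  exact (hbound k).2
end

section
/- Let λ ∈ (0,1) and ε > 0. Define R₀ = diag(ε², 1) ∈ ℝ^{2×2} and, for all k ≥ 0, Rₖ₊₁ = λRₖ + diag(ε², λ^{k+1}). Then for all k ≥ 0, Rₖ = diag(ε² ∑_{i=0}^{k} λⁱ, (k+1)λᵏ) (with R₀ as given), and Rₖ converges to diag(ε²/(1−λ), 0) as k → ∞; in particular there is no γ > 0 with λ_min(Rₖ) ≥ γ for all k. -/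
open Matrix Filter

/-! Both the recursion and the forgetting factor act entrywise on diagonal matrices, so `Rₖ`
stays diagonal and its two entries solve scalar linear recursions: a geometric partial sum
`ε² ∑_{i ≤ k} λⁱ` and `(k + 1) λᵏ`. The second entry tends to `0`, and since positive
semidefiniteness of `Rₖ - γ I` bounds every diagonal entry of `Rₖ` from below by `γ`, no
`γ > 0` can work. -/

section

variable {n α R : Type*} [DecidableEq n]

theorem eq_diagonal_of_linear_recursion [AddZeroClass α] [SMulZeroClass R α]
    {A : ℕ → Matrix n n α} {d c : ℕ → n → α} (r : R)
    (hA₀ : A 0 = diagonal (d 0)) (hA : ∀ k, A (k + 1) = r • A k + diagonal (c k))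
    (hd : ∀ k, d (k + 1) = r • d k + c k) (k : ℕ) :
    A k = diagonal (d k) := by
  induction k with
  | zero => exact hA₀
  | succ k ih => rw [hA k, ih, hd k, ← diagonal_smul, diagonal_add]; rfl

theorem le_apply_of_posSemidef_sub_smul_one [Fintype n] {A : Matrix n n ℝ} {γ : ℝ}
    (h : (A - γ • (1 : Matrix n n ℝ)).PosSemidef) (i : n) : γ ≤ A i i := by
  have := h.diag_nonneg (i := i)
  simp only [Matrix.sub_apply, Matrix.smul_apply, one_apply_eq, smul_eq_mul, mul_one] at this
  linarith

end

theorem tendsto_succ_mul_pow_atTop_nhds_zero {r : ℝ} (hr₀ : 0 ≤ r) (hr₁ : r < 1) :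
    Tendsto (fun k : ℕ => ((k : ℝ) + 1) * r ^ k) atTop (nhds 0) := by
  simpa [add_mul] using (tendsto_self_mul_const_pow_of_lt_one hr₀ hr₁).add
    (tendsto_pow_atTop_nhds_zero_of_lt_one hr₀ hr₁)

theorem tendsto_geom_sum_range_succ {r : ℝ} (hr₀ : 0 ≤ r) (hr₁ : r < 1) :
    Tendsto (fun k : ℕ => ∑ i ∈ Finset.range (k + 1), r ^ i) atTop (nhds (1 - r)⁻¹) :=
  (hasSum_geometric_of_lt_one hr₀ hr₁).tendsto_sum_nat.comp (tendsto_add_atTop_nat 1)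

theorem zhu_counterexample_general
    (lam : ℝ) (hlam : lam ∈ Set.Ioo (0:ℝ) 1)
    (ε : ℝ)
    (R : ℕ → Matrix (Fin 2) (Fin 2) ℝ)
    (hR0 : R 0 = Matrix.diagonal ![ε ^ 2, 1])
    (hrec : ∀ k, R (k + 1) = lam • R k + Matrix.diagonal ![ε ^ 2, lam ^ (k + 1)]) :
    (∀ k, R k = Matrix.diagonal
      ![ε ^ 2 * ∑ i ∈ Finset.range (k + 1), lam ^ i, (k + 1 : ℝ) * lam ^ k]) ∧
    Tendsto R atTop (nhds (Matrix.diagonal ![ε ^ 2 / (1 - lam), 0])) ∧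
    ¬ ∃ γ : ℝ, 0 < γ ∧ ∀ k,
      (R k - γ • (1 : Matrix (Fin 2) (Fin 2) ℝ)).PosSemidef := by
  obtain ⟨hlam₀, hlam₁⟩ := hlam
  have hform : ∀ k, R k = Matrix.diagonal
      ![ε ^ 2 * ∑ i ∈ Finset.range (k + 1), lam ^ i, (k + 1 : ℝ) * lam ^ k] := by
    refine eq_diagonal_of_linear_recursion lam (by simpa using hR0) hrec fun k => ?_
    ext i
    fin_cases i
    · simp only [geom_sum_succ (n := k + 1), Fin.zero_eta, Fin.isValue,
        cons_val_zero, smul_cons, smul_eq_mul, smul_empty, Pi.add_apply]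
      ring
    · simp only [Nat.cast_add, Nat.cast_one, Fin.mk_one, Fin.isValue, cons_val_one, smul_cons,
        smul_eq_mul, smul_empty, Pi.add_apply, cons_val_fin_one]
      ring
  have hdecay := tendsto_succ_mul_pow_atTop_nhds_zero hlam₀.le hlam₁
  refine ⟨hform, ?_, ?_⟩
  · simp only [funext hform, div_eq_mul_inv]
    exact (continuous_id.matrix_diagonal.tendsto _).comp <|
      ((tendsto_geom_sum_range_succ hlam₀.le hlam₁).const_mul _).matrixVecCons
        (hdecay.matrixVecCons tendsto_const_nhds)
  · rintro ⟨γ, hγ, hpsd⟩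
    have hbound (k : ℕ) : γ ≤ ((k : ℝ) + 1) * lam ^ k := by
      simpa [hform k] using le_apply_of_posSemidef_sub_smul_one (hpsd k) 1
    linarith [ge_of_tendsto' hdecay hbound]

/-- Counterexample for the scheme of Zhu et al.: with `R₀ = diag(ε², 1)` and
`R_{k+1} = λ Rₖ + diag(ε², λ^{k+1})`, one has
`Rₖ = diag(ε² ∑_{i=0}^{k} λⁱ, (k+1) λᵏ)` for all `k`, `Rₖ → diag(ε²/(1−λ), 0)`, and there
is no uniform lower bound `γ > 0` with `λ_min(Rₖ) ≥ γ` for all `k`. -/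
theorem zhu_counterexample
    (lam : ℝ) (hlam : lam ∈ Set.Ioo (0:ℝ) 1)
    (ε : ℝ) (hε : 0 < ε)
    (R : ℕ → Matrix (Fin 2) (Fin 2) ℝ)
    (hR0 : R 0 = Matrix.diagonal ![ε ^ 2, 1])
    (hrec : ∀ k, R (k + 1) = lam • R k + Matrix.diagonal ![ε ^ 2, lam ^ (k + 1)]) :
    (∀ k, R k = Matrix.diagonal
      ![ε ^ 2 * ∑ i ∈ Finset.range (k + 1), lam ^ i, (k + 1 : ℝ) * lam ^ k]) ∧
    Tendsto R atTop (nhds (Matrix.diagonal ![ε ^ 2 / (1 - lam), 0])) ∧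
    ¬ ∃ γ : ℝ, 0 < γ ∧ ∀ k,
      (R k - γ • (1 : Matrix (Fin 2) (Fin 2) ℝ)).PosSemidef :=
  zhu_counterexample_general lam hlam ε R hR0 hrec
end
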